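/- arXiv:math/0610687 — 5 statements merged into one kernel-verified Lean document; each statement's English description precedes it below -/
import Mathlib

section
/- On ℚ_p with the metric induced by the normalized p-adic absolute value, the 1-dimensional Hausdorff measure of ℤ_p equals 1; more generally, the 1-dimensional Hausdorff measure on ℚ_p coincides with the Haar measure normalized by μ(ℤ_p) = 1. -/
/-!
A translation-invariant `μ` with `μ ℤ_p = 1` gives each of the `p ^ n` disjoint balls of radius
`p ^ (-n)` tiling `ℤ_p` measure `p ^ (-n)`. Since the norm only takes the values `p ^ k`, a ball of
radius `r ≤ 1` equals a ball of radius `p ^ (-n) ≤ r`, so `μ s ≤ diam s` for small `s`, i.e.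
`μ ≤ μH[1]`. Conversely the same tilings are covers of `ℤ_p` by `p ^ n` sets of diameter
`p ^ (-n)`, so `μH[1] ℤ_p ≤ 1`. Hence `μH[1]` is a locally finite translation-invariant measure
agreeing with `μ` on `ℤ_p`, and uniqueness of Haar measure gives `μH[1] = μ`.
-/

open MeasureTheory Metric Filter Topology
open scoped ENNReal

lemma IsUltrametricDist.ediam_closedBall_le {X : Type*} [PseudoMetricSpace X] [IsUltrametricDist X]
    (c : X) (r : ℝ) : ediam (closedBall c r) ≤ ENNReal.ofReal r :=
  ediam_le fun x hx y hy => by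
    rw [edist_dist]
    exact ENNReal.ofReal_le_ofReal <|
      (dist_triangle_max x c y).trans (max_le hx (by rwa [dist_comm]))

lemma MeasureTheory.measure_closedBall_eq_closedBall_zero {E : Type*} [SeminormedAddCommGroup E]
    [MeasurableSpace E] [BorelSpace E] (μ : Measure E) [μ.IsAddLeftInvariant] (x : E) (r : ℝ) :
    μ (closedBall x r) = μ (closedBall 0 r) := by
  rw [← measure_preimage_add μ x, preimage_add_closedBall, sub_self]

lemma MeasureTheory.Measure.le_hausdorffMeasure_one_of_measure_closedBall_le {X : Type*}
    [MetricSpace X] [MeasurableSpace X] [BorelSpace X] (μ : Measure X) {R : ℝ} (hR : 0 < R)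
    (h : ∀ c r, 0 < r → r ≤ R → μ (closedBall c r) ≤ ENNReal.ofReal r) : μ ≤ μH[1] := by
  refine Measure.le_hausdorffMeasure 1 μ (ENNReal.ofReal R) (by simpa using hR) fun s hsR => ?_
  rw [ENNReal.rpow_one]
  obtain rfl | ⟨x, hx⟩ := s.eq_empty_or_nonempty
  · simp
  refine le_of_forall_gt_imp_ge_of_dense fun t ht => ?_
  obtain rfl | htop := eq_or_ne t ∞
  · exact le_top
  have hsR' : (ediam s).toReal ≤ R := ENNReal.toReal_le_of_le_ofReal hR.le hsR
  have hst : (ediam s).toReal < t.toReal := ENNReal.toReal_strict_mono htop ht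
  have hs : s ⊆ closedBall x (min t.toReal R) := fun y hy =>
    (dist_le_diam_of_mem' (ht.trans_le le_top).ne hy hx).trans (le_min hst.le hsR')
  calc μ s ≤ μ (closedBall x (min t.toReal R)) := measure_mono hs
    _ ≤ ENNReal.ofReal (min t.toReal R) :=
      h x _ (lt_min (ENNReal.toReal_nonneg.trans_lt hst) hR) (min_le_right _ _)
    _ ≤ t := (ENNReal.ofReal_le_ofReal (min_le_left _ _)).trans ENNReal.ofReal_toReal_le

lemma MeasureTheory.Measure.isAddLeftInvariant_eq_of_apply_eq {G : Type*} [AddGroup G]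
    [TopologicalSpace G] [IsTopologicalAddGroup G] [LocallyCompactSpace G] [SecondCountableTopology G]
    [MeasurableSpace G] [BorelSpace G] (μ' μ : Measure G) [μ.IsAddHaarMeasure]
    [IsFiniteMeasureOnCompacts μ'] [μ'.IsAddLeftInvariant] {s : Set G} (h₀ : μ s ≠ 0)
    (hfin : μ s ≠ ∞) (hs : μ' s = μ s) : μ' = μ := by
  have hμ' := Measure.isAddLeftInvariant_eq_smul μ' μ
  rw [hμ', Measure.smul_apply, ENNReal.smul_def, smul_eq_mul] at hs
  have hc : Measure.addHaarScalarFactor μ' μ = 1 := by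
    exact_mod_cast (ENNReal.mul_eq_right h₀ hfin).1 hs
  rw [hμ', hc, one_smul]

namespace Padic

variable {p : ℕ} [hp : Fact p.Prime]

lemma closedBall_zero_one_eq_iUnion (n : ℕ) :
    closedBall (0 : ℚ_[p]) 1 = ⋃ a : Fin (p ^ n), closedBall (a : ℚ_[p]) (p ^ (-n : ℤ)) := by
  ext x
  rw [Set.mem_iUnion]
  constructor
  · intro hx
    rw [mem_closedBall, dist_zero_right] at hx
    let u : ℤ_[p] := ⟨x, hx⟩
    refine ⟨⟨u.appr n, u.appr_lt n⟩, ?_⟩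
    have hu := (PadicInt.norm_le_pow_iff_mem_span_pow _ n).2 (u.appr_spec n)
    rwa [PadicInt.norm_def, PadicInt.coe_sub, PadicInt.coe_natCast, ← dist_eq_norm] at hu
  · rintro ⟨a, ha⟩
    have ha1 : (a : ℚ_[p]) ∈ closedBall 0 1 := by simpa using norm_int_le_one (a : ℤ)
    rw [IsUltrametricDist.closedBall_eq_of_mem ha1]
    exact closedBall_subset_closedBall
      (zpow_le_one_of_nonpos₀ (by exact_mod_cast hp.out.one_lt.le) (by simp)) ha

lemma pairwise_disjoint_closedBall_natCast (n : ℕ) :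
    Pairwise (Function.onFun Disjoint
      fun a : Fin (p ^ n) => closedBall (a : ℚ_[p]) (p ^ (-n : ℤ))) := by
  intro a b hab
  refine (IsUltrametricDist.closedBall_eq_or_disjoint _ _ _).resolve_left fun heq => hab ?_
  have hmem : (a : ℚ_[p]) ∈ closedBall (b : ℚ_[p]) (p ^ (-n : ℤ)) :=
    heq ▸ mem_closedBall_self (by positivity)
  rw [mem_closedBall, dist_eq_norm, show (a : ℚ_[p]) - b = ((a - b : ℤ) : ℚ_[p]) by push_cast; ring,
    norm_int_le_pow_iff_dvd] at hmem
  have := Int.eq_zero_of_abs_lt_dvd hmem <| abs_sub_lt_of_nonneg_of_lt (by positivity)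
    (by exact_mod_cast a.isLt) (by positivity) (by exact_mod_cast b.isLt)
  exact Fin.ext (by omega)

lemma ofReal_zpow_neg (n : ℕ) : ENNReal.ofReal ((p : ℝ) ^ (-n : ℤ)) = (p : ℝ≥0∞)⁻¹ ^ n := by
  rw [zpow_neg, zpow_natCast, ENNReal.ofReal_inv_of_pos (pow_pos (by exact_mod_cast hp.out.pos) n),
    ENNReal.ofReal_pow (Nat.cast_nonneg p), ENNReal.ofReal_natCast, ENNReal.inv_pow]

variable [MeasurableSpace ℚ_[p]] [BorelSpace ℚ_[p]]

lemma natCast_pow_mul_measure_closedBall (μ : Measure ℚ_[p]) [μ.IsAddLeftInvariant] (c : ℚ_[p])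
    (n : ℕ) : (p : ℝ≥0∞) ^ n * μ (closedBall c (p ^ (-n : ℤ))) = μ (closedBall 0 1) := by
  rw [closedBall_zero_one_eq_iUnion n, measure_iUnion (pairwise_disjoint_closedBall_natCast n)
    fun _ => measurableSet_closedBall, tsum_fintype]
  simp only [measure_closedBall_eq_closedBall_zero μ _ ((p : ℝ) ^ (-n : ℤ)), Finset.sum_const,
    Finset.card_univ, Fintype.card_fin, nsmul_eq_mul, Nat.cast_pow]

lemma measure_closedBall_zpow_neg (μ : Measure ℚ_[p]) [μ.IsAddLeftInvariant]
    (hμ : μ (closedBall 0 1) = 1) (c : ℚ_[p]) (n : ℕ) :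
    μ (closedBall c (p ^ (-n : ℤ))) = ENNReal.ofReal (p ^ (-n : ℤ)) := by
  rw [ofReal_zpow_neg, ← ENNReal.inv_pow]
  exact ENNReal.eq_inv_of_mul_eq_one_left (by rw [mul_comm, natCast_pow_mul_measure_closedBall, hμ])

lemma measure_closedBall_le_ofReal (μ : Measure ℚ_[p]) [μ.IsAddLeftInvariant]
    (hμ : μ (closedBall 0 1) = 1) (c : ℚ_[p]) {r : ℝ} (hr : 0 < r) (hr1 : r ≤ 1) :
    μ (closedBall c r) ≤ ENNReal.ofReal r := by
  have hp1 : (1 : ℝ) < p := by exact_mod_cast hp.out.one_lt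
  obtain ⟨k, hkr, hrk⟩ := exists_mem_Ico_zpow hr hp1
  obtain ⟨n, rfl⟩ := Int.exists_eq_neg_ofNat <| (zpow_le_one_iff_right₀ hp1).1 (hkr.trans hr1)
  have hball : closedBall c r ⊆ closedBall c (p ^ (-n : ℤ)) := fun x hx => by
    rw [mem_closedBall, dist_eq_norm, norm_le_pow_iff_norm_lt_pow_add_one]
    exact (mem_closedBall_iff_norm.1 hx).trans_lt hrk
  calc μ (closedBall c r) ≤ μ (closedBall c (p ^ (-n : ℤ))) := measure_mono hball
    _ = ENNReal.ofReal (p ^ (-n : ℤ)) := measure_closedBall_zpow_neg μ hμ c n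
    _ ≤ ENNReal.ofReal r := ENNReal.ofReal_le_ofReal hkr

lemma le_hausdorffMeasure_one (μ : Measure ℚ_[p]) [μ.IsAddLeftInvariant]
    (hμ : μ (closedBall 0 1) = 1) : μ ≤ μH[1] :=
  Measure.le_hausdorffMeasure_one_of_measure_closedBall_le μ one_pos fun c _ hr hr1 =>
    measure_closedBall_le_ofReal μ hμ c hr hr1

lemma hausdorffMeasure_closedBall_zero_one_le : μH[1] (closedBall (0 : ℚ_[p]) 1) ≤ 1 := by
  let r : ℕ → ℝ≥0∞ := fun n => ENNReal.ofReal (p ^ (-n : ℤ))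
  have hr : Tendsto r atTop (𝓝 0) := by
    simp only [r, ofReal_zpow_neg]
    exact ENNReal.tendsto_pow_atTop_nhds_zero_of_lt_one
      (ENNReal.inv_lt_one.2 (by exact_mod_cast hp.out.one_lt))
  have hdiam (n : ℕ) (a : Fin (p ^ n)) : ediam (closedBall (a : ℚ_[p]) (p ^ (-n : ℤ))) ≤ r n :=
    IsUltrametricDist.ediam_closedBall_le _ _
  calc μH[1] (closedBall (0 : ℚ_[p]) 1)
      ≤ liminf (fun n : ℕ => ∑ a : Fin (p ^ n),
          ediam (closedBall (a : ℚ_[p]) (p ^ (-n : ℤ))) ^ (1 : ℝ)) atTop :=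
        Measure.hausdorffMeasure_le_liminf_sum 1 _ r hr _ (.of_forall hdiam)
          (.of_forall fun n => (closedBall_zero_one_eq_iUnion n).le)
    _ ≤ 1 := liminf_le_of_frequently_le' <| .of_forall fun n => calc
      _ ≤ ∑ _a : Fin (p ^ n), r n :=
        Finset.sum_le_sum fun a _ => (ENNReal.rpow_one _).trans_le (hdiam n a)
      _ = 1 := by
        simp only [r]
        rw [Finset.sum_const, Finset.card_univ, Fintype.card_fin, nsmul_eq_mul, Nat.cast_pow,
          ofReal_zpow_neg, ← mul_pow, ENNReal.mul_inv_cancel (by exact_mod_cast hp.out.ne_zero)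
          (ENNReal.natCast_ne_top p), one_pow]

instance : IsLocallyFiniteMeasure (μH[1] : Measure ℚ_[p]) :=
  ⟨fun x => ⟨closedBall x 1, closedBall_mem_nhds x one_pos, by
    rw [measure_closedBall_eq_closedBall_zero]
    exact hausdorffMeasure_closedBall_zero_one_le.trans_lt ENNReal.one_lt_top⟩⟩

end Padic

/-- On `ℚ_p` (metric from the normalized `p`-adic absolute value), the 1-dimensional
Hausdorff measure of `ℤ_p` equals `1`; more generally, the 1-dimensional Hausdorff
measure coincides with the Haar measure normalized by `μ(ℤ_p) = 1`. -/
theorem hausdorff_eq_haar_padic (p : ℕ) [Fact p.Prime]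
    [MeasurableSpace ℚ_[p]] [BorelSpace ℚ_[p]]
    (μ : Measure ℚ_[p]) [μ.IsAddHaarMeasure]
    (hμ : μ {x : ℚ_[p] | ‖x‖ ≤ 1} = 1) :
    μH[1] {x : ℚ_[p] | ‖x‖ ≤ 1} = 1 ∧ (μH[1] : Measure ℚ_[p]) = μ := by
  have hball : {x : ℚ_[p] | ‖x‖ ≤ 1} = closedBall 0 1 := by ext; simp
  rw [hball] at hμ ⊢
  have hH : μH[1] (closedBall (0 : ℚ_[p]) 1) = 1 :=
    le_antisymm Padic.hausdorffMeasure_closedBall_zero_one_le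
      (hμ ▸ Padic.le_hausdorffMeasure_one μ hμ _)
  exact ⟨hH, Measure.isAddLeftInvariant_eq_of_apply_eq _ μ (by simp [hμ]) (by simp [hμ])
    (hH.trans hμ.symm)⟩
end

section
/- On the product space X = ℝ × ℚ_p equipped with the maximum metric d_∞((x₁,x₂),(y₁,y₂)) = max{|x₁−y₁|, ‖x₂−y₂‖_p}, the 2-dimensional Hausdorff measure is a translation-invariant Borel measure that is finite and positive on [0,1] × ℤ_p; hence it is a Haar measure on the locally compact abelian group X. -/
open MeasureTheory

/-!
Translations are isometries of the max metric, so `μH[2]` is translation invariant. Write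
`K = [0,1] × ℤ_p`. Covering `K` by the `(p^n + 1) p^n` boxes `[i/p^n, (i+1)/p^n] × (j + p^n ℤ_p)`,
each of diameter `p^{-n}`, gives `μH[2] K ≤ 2`. For the lower bound, `ℤ_p` contains the `p^n`
disjoint translates `j + p^n ℤ_p`, so any invariant measure `μ` on `ℚ_p` has
`μ (closedBall x r) ≤ p r μ ℤ_p` for `0 < r ≤ 1`; hence `volume.prod μ` gives every set `s` of
diameter at most `1` mass at most `2 p μ ℤ_p (diam s)^2`, and the mass distribution principle
yields `μH[2] K > 0`.
A translation-invariant measure that is finite and positive on a compact set with nonempty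
interior is a Haar measure.
-/

open Measure Metric Set Filter Topology
open scoped ENNReal Pointwise

theorem MeasureTheory.card_mul_measure_le_of_pairwiseDisjoint_vadd {G : Type*} [AddGroup G]
    [MeasurableSpace G] [MeasurableAdd G] (μ : Measure G) [μ.IsAddLeftInvariant] {s : Finset G}
    {A B : Set G}
    (hB : MeasurableSet B) (hdisj : (s : Set G).PairwiseDisjoint (· +ᵥ B))
    (hA : ∀ g ∈ s, g +ᵥ B ⊆ A) : s.card * μ B ≤ μ A :=
  calc s.card * μ B = ∑ g ∈ s, μ (g +ᵥ B) := by simp [measure_vadd]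
    _ = μ (⋃ g ∈ s, g +ᵥ B) := (measure_biUnion_finset hdisj fun g _ => hB.const_vadd g).symm
    _ ≤ μ A := measure_mono (iUnion₂_subset hA)

theorem Metric.ediam_prod_le {X Y : Type*} [PseudoEMetricSpace X] [PseudoEMetricSpace Y]
    {s : Set X} {t : Set Y} {r : ℝ≥0∞} (hs : ediam s ≤ r) (ht : ediam t ≤ r) :
    ediam (s ×ˢ t) ≤ r :=
  ediam_le fun x hx y hy => by
    rw [Prod.edist_eq]
    exact max_le (edist_le_of_ediam_le hx.1 hy.1 hs) (edist_le_of_ediam_le hx.2 hy.2 ht)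

theorem MeasureTheory.hausdorffMeasure_prod_le_liminf_card_mul {X Y : Type*} [EMetricSpace X]
    [EMetricSpace Y] [MeasurableSpace (X × Y)] [BorelSpace (X × Y)] {ι κ : ℕ → Type*}
    [∀ n, Fintype (ι n)] [∀ n, Fintype (κ n)] {d : ℝ} (hd : 0 ≤ d) {s : Set X} {t : Set Y}
    {r : ℕ → ℝ≥0∞}
    (hr : Tendsto r atTop (𝓝 0)) (a : ∀ n, ι n → Set X) (b : ∀ n, κ n → Set Y)
    (ha : ∀ n i, ediam (a n i) ≤ r n) (hb : ∀ n j, ediam (b n j) ≤ r n)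
    (hs : ∀ n, s ⊆ ⋃ i, a n i) (ht : ∀ n, t ⊆ ⋃ j, b n j) :
    μH[d] (s ×ˢ t) ≤
      liminf (fun n => (Fintype.card (ι n) * Fintype.card (κ n) : ℝ≥0∞) * r n ^ d) atTop := by
  refine (hausdorffMeasure_le_liminf_sum d (s ×ˢ t) r hr
    (fun n (ij : ι n × κ n) => a n ij.1 ×ˢ b n ij.2)
    (.of_forall fun n (ij : ι n × κ n) => ediam_prod_le (ha n ij.1) (hb n ij.2))
    (.of_forall fun n => (prod_mono (hs n) (ht n)).trans (iUnion_prod _ _).symm.subset)).trans ?_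
  refine liminf_le_liminf (.of_forall fun n => ?_)
  calc ∑ ij : ι n × κ n, ediam (a n ij.1 ×ˢ b n ij.2) ^ d ≤ ∑ _ij : ι n × κ n, r n ^ d :=
        Finset.sum_le_sum fun ij _ =>
          ENNReal.rpow_le_rpow (ediam_prod_le (ha n ij.1) (hb n ij.2)) hd
    _ = _ := by simp [Fintype.card_prod, mul_comm]

namespace IsUltrametricDist

variable {X : Type*} [PseudoMetricSpace X] [IsUltrametricDist X]

theorem ediam_closedBall_le_s7 (x : X) (r : ℝ) : ediam (closedBall x r) ≤ ENNReal.ofReal r :=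
  ediam_le fun y hy z hz => by
    rw [edist_dist]
    exact ENNReal.ofReal_le_ofReal
      ((dist_triangle_max y x z).trans (max_le hy (by rwa [dist_comm])))

theorem disjoint_closedBall_of_lt_dist {x y : X} {r : ℝ} (h : r < dist x y) :
    Disjoint (closedBall x r) (closedBall y r) :=
  Set.disjoint_left.mpr fun z hx hy =>
    h.not_ge ((dist_triangle_max x z y).trans (max_le (by rwa [dist_comm]) hy))

end IsUltrametricDist

namespace Padic

variable {p : ℕ} [Fact p.Prime]

theorem closedBall_zero_one_eq : closedBall (0 : ℚ_[p]) 1 = {x | ‖x‖ ≤ 1} := by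
  ext; simp

theorem closedBall_zero_one_subset_iUnion (n : ℕ) :
    closedBall (0 : ℚ_[p]) 1 ⊆ ⋃ j : Fin (p ^ n), closedBall (j : ℚ_[p]) ((p : ℝ) ^ n)⁻¹ := by
  intro x hx
  obtain ⟨x, rfl⟩ : ∃ z : ℤ_[p], (z : ℚ_[p]) = x := ⟨⟨x, by simpa using hx⟩, rfl⟩
  refine mem_iUnion.mpr ⟨⟨x.appr n, x.appr_lt n⟩, ?_⟩
  have h := (PadicInt.norm_le_pow_iff_mem_span_pow _ n).mpr (x.appr_spec n)
  rw [zpow_neg, zpow_natCast] at h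
  rw [mem_closedBall, dist_eq_norm]
  exact_mod_cast h

theorem inv_pow_lt_dist_natCast {n j k : ℕ} (hj : j < p ^ n) (hk : k < p ^ n) (hjk : j ≠ k) :
    ((p : ℝ) ^ n)⁻¹ < dist (j : ℚ_[p]) k := by
  by_contra! h
  have hdvd : ((p ^ n : ℕ) : ℤ) ∣ (j : ℤ) - k := by
    rw [Nat.cast_pow, ← norm_int_le_pow_iff_dvd, zpow_neg, zpow_natCast]
    simpa [dist_eq_norm] using h
  exact hjk ((Nat.modEq_iff_dvd.mpr hdvd).symm.eq_of_lt_of_lt hj hk)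

variable [MeasurableSpace ℚ_[p]] [BorelSpace ℚ_[p]]

theorem pow_mul_measure_closedBall_le (μ : Measure ℚ_[p]) [μ.IsAddLeftInvariant] (n : ℕ) :
    (p : ℝ≥0∞) ^ n * μ (closedBall 0 ((p : ℝ) ^ n)⁻¹) ≤ μ (closedBall 0 1) := by
  have hr : ((p : ℝ) ^ n)⁻¹ ≤ 1 :=
    inv_le_one_of_one_le₀ (one_le_pow₀ (by exact_mod_cast (Fact.out : p.Prime).one_le))
  have key := card_mul_measure_le_of_pairwiseDisjoint_vadd μ measurableSet_closedBall
    (s := (Finset.range (p ^ n)).map Nat.castEmbedding) (A := closedBall 0 1)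
    (B := closedBall 0 ((p : ℝ) ^ n)⁻¹) ?_ ?_
  · simpa using key
  · simp only [Finset.coe_map, Finset.coe_range]
    rintro _ ⟨j, hj, rfl⟩ _ ⟨k, hk, rfl⟩ hjk
    simp only [Function.onFun, vadd_closedBall_zero]
    exact IsUltrametricDist.disjoint_closedBall_of_lt_dist
      (inv_pow_lt_dist_natCast hj hk (fun h => hjk (congrArg _ h)))
  · intro g hg
    obtain ⟨j, -, rfl⟩ := Finset.mem_map.mp hg
    have hj : (j : ℚ_[p]) ∈ closedBall 0 1 := by simpa using norm_int_le_one (p := p) j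
    rw [vadd_closedBall_zero, IsUltrametricDist.closedBall_eq_of_mem hj]
    exact closedBall_subset_closedBall hr

theorem measure_closedBall_le (μ : Measure ℚ_[p]) [μ.IsAddLeftInvariant] (x : ℚ_[p]) {r : ℝ}
    (hr0 : 0 < r) (hr1 : r ≤ 1) :
    μ (closedBall x r) ≤ p * ENNReal.ofReal r * μ (closedBall 0 1) := by
  have hp : (1 : ℝ) < p := by exact_mod_cast (Fact.out : p.Prime).one_lt
  obtain ⟨n, hlt, hle⟩ := exists_nat_pow_near_of_lt_one hr0 hr1
    (inv_pos.mpr (zero_lt_one.trans hp)) (inv_lt_one_of_one_lt₀ hp)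
  rw [inv_pow] at hlt hle
  have hp0 : (p : ℝ≥0∞) ≠ 0 := by exact_mod_cast (Fact.out : p.Prime).ne_zero
  have hcancel : (p : ℝ≥0∞) * ((p : ℝ≥0∞) ^ (n + 1))⁻¹ * (p : ℝ≥0∞) ^ n = 1 := by
    rw [mul_right_comm, ← pow_succ', ENNReal.mul_inv_cancel (by simp [hp0]) (by simp)]
  have hpow : ((p : ℝ≥0∞) ^ (n + 1))⁻¹ ≤ ENNReal.ofReal r := by
    rw [← ENNReal.ofReal_natCast, ← ENNReal.ofReal_pow (by positivity),
      ← ENNReal.ofReal_inv_of_pos (by positivity)]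
    exact ENNReal.ofReal_le_ofReal hlt.le
  calc μ (closedBall x r) ≤ μ (closedBall x ((p : ℝ) ^ n)⁻¹) :=
        measure_mono (closedBall_subset_closedBall hle)
    _ = p * ((p : ℝ≥0∞) ^ (n + 1))⁻¹ * ((p : ℝ≥0∞) ^ n * μ (closedBall 0 ((p : ℝ) ^ n)⁻¹)) := by
        rw [← mul_assoc, hcancel, one_mul, ← vadd_closedBall_zero, measure_vadd]
    _ ≤ p * ENNReal.ofReal r * μ (closedBall 0 1) := by
        gcongr
        exact pow_mul_measure_closedBall_le μ n

theorem volume_prod_le_mul_ediam_sq (μ : Measure ℚ_[p]) [SFinite μ] [μ.IsAddLeftInvariant]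
    {s : Set (ℝ × ℚ_[p])} (hs : ediam s ≤ 1) :
    volume.prod μ s ≤ 2 * p * μ (closedBall 0 1) * ediam s ^ (2 : ℝ) := by
  rcases s.eq_empty_or_nonempty with rfl | ⟨z, hz⟩
  · simp
  have hfin : ediam s ≠ ⊤ := (hs.trans_lt ENNReal.one_lt_top).ne
  have hd1 : diam s ≤ 1 := ENNReal.toReal_one ▸ ENNReal.toReal_mono ENNReal.one_ne_top hs
  have hsub : s ⊆ closedBall z.1 (diam s) ×ˢ closedBall z.2 (diam s) := by
    rw [closedBall_prod_same]
    exact fun y hy => dist_le_diam_of_mem (isBounded_iff_ediam_ne_top.mpr hfin) hy hz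
  calc volume.prod μ s
      ≤ volume (closedBall z.1 (diam s)) * μ (closedBall z.2 (diam s)) :=
        (measure_mono hsub).trans_eq (prod_prod _ _)
    _ ≤ ENNReal.ofReal (2 * diam s) * (p * ENNReal.ofReal (diam s) * μ (closedBall 0 1)) := by
        rw [Real.volume_closedBall]
        rcases (diam_nonneg (s := s)).eq_or_lt with h0 | hpos
        · simp [← h0]
        · gcongr
          exact measure_closedBall_le μ z.2 hpos hd1
    _ = 2 * p * μ (closedBall 0 1) * ediam s ^ (2 : ℝ) := by
        rw [ENNReal.ofReal_mul zero_le_two, diam, ENNReal.ofReal_toReal hfin, ENNReal.rpow_two]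
        simp only [ENNReal.ofReal_ofNat]
        ring

end Padic

theorem Real.Icc_zero_one_subset_iUnion_Icc {N : ℕ} (hN : 0 < N) :
    Icc (0 : ℝ) 1 ⊆ ⋃ i : Fin (N + 1), Icc (i / N : ℝ) ((i + 1) / N) := by
  intro x ⟨hx0, hx1⟩
  have hN' : (0 : ℝ) < N := by exact_mod_cast hN
  have hxN : 0 ≤ x * N := by positivity
  have hi : ⌊x * N⌋₊ < N + 1 :=
    Nat.lt_succ_of_le (Nat.floor_le_of_le (by simpa using mul_le_mul_of_nonneg_right hx1 hN'.le))
  refine mem_iUnion.mpr ⟨⟨⌊x * N⌋₊, hi⟩, ?_, ?_⟩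
  · rw [div_le_iff₀ hN']
    exact Nat.floor_le hxN
  · rw [le_div_iff₀ hN']
    exact (Nat.lt_floor_add_one _).le

section HausdorffMeasure

variable (p : ℕ) [Fact p.Prime] [MeasurableSpace (ℝ × ℚ_[p])] [BorelSpace (ℝ × ℚ_[p])]

theorem hausdorffMeasure_Icc_prod_closedBall_pos :
    0 < μH[2] (Icc (0 : ℝ) 1 ×ˢ closedBall (0 : ℚ_[p]) 1) := by
  let _ : MeasurableSpace ℚ_[p] := borel ℚ_[p]
  have : BorelSpace ℚ_[p] := ⟨rfl⟩
  obtain rfl : ‹MeasurableSpace (ℝ × ℚ_[p])› = Prod.instMeasurableSpace :=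
    BorelSpace.measurable_eq.trans (Prod.borelSpace (α := ℝ) (β := ℚ_[p])).measurable_eq.symm
  set μ : Measure ℚ_[p] := addHaar
  set C : ℝ≥0∞ := 2 * p * μ (closedBall 0 1)
  have hC : C ≠ ⊤ := ENNReal.mul_ne_top (ENNReal.mul_ne_top ENNReal.ofNat_ne_top
    (ENNReal.natCast_ne_top p)) (isCompact_closedBall (0 : ℚ_[p]) 1).measure_ne_top
  have hC0 : C ≠ 0 := by
    simp [C, (Fact.out : p.Prime).ne_zero, (measure_closedBall_pos μ (0 : ℚ_[p]) one_pos).ne']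
  have hmass : C⁻¹ • (volume : Measure ℝ).prod μ ≤ μH[2] :=
    le_hausdorffMeasure 2 _ 1 one_pos fun s hs => by
      rw [Measure.smul_apply, smul_eq_mul, ENNReal.inv_mul_le_iff hC0 hC]
      exact Padic.volume_prod_le_mul_ediam_sq μ hs
  calc 0 < C⁻¹ * μ (closedBall 0 1) :=
        ENNReal.mul_pos (ENNReal.inv_ne_zero.mpr hC) (measure_closedBall_pos μ _ one_pos).ne'
    _ = (C⁻¹ • (volume : Measure ℝ).prod μ) (Icc (0 : ℝ) 1 ×ˢ closedBall (0 : ℚ_[p]) 1) := by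
        simp [prod_prod]
    _ ≤ μH[2] (Icc (0 : ℝ) 1 ×ˢ closedBall (0 : ℚ_[p]) 1) := hmass _

theorem hausdorffMeasure_Icc_prod_closedBall_le_two :
    μH[2] (Icc (0 : ℝ) 1 ×ˢ closedBall (0 : ℚ_[p]) 1) ≤ 2 := by
  have hp : (1 : ℝ) < p := by exact_mod_cast (Fact.out : p.Prime).one_lt
  have hr : Tendsto (fun n : ℕ => ENNReal.ofReal ((p : ℝ) ^ n)⁻¹) atTop (𝓝 0) := by
    rw [← ENNReal.ofReal_zero]
    exact ENNReal.tendsto_ofReal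
      (tendsto_inv_atTop_zero.comp (tendsto_pow_atTop_atTop_of_one_lt hp))
  refine (hausdorffMeasure_prod_le_liminf_card_mul zero_le_two hr
    (fun n (i : Fin (p ^ n + 1)) => Icc (i / (p ^ n : ℕ) : ℝ) ((i + 1) / (p ^ n : ℕ)))
    (fun n (j : Fin (p ^ n)) => closedBall (j : ℚ_[p]) ((p : ℝ) ^ n)⁻¹) (fun n i => ?_)
    (fun n j => IsUltrametricDist.ediam_closedBall_le_s7 _ _)
    (fun n => Real.Icc_zero_one_subset_iUnion_Icc (pow_pos (Fact.out : p.Prime).pos n))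
    Padic.closedBall_zero_one_subset_iUnion).trans ?_
  · rw [Real.ediam_Icc, add_div, add_sub_cancel_left, one_div, Nat.cast_pow]
  · refine (liminf_le_liminf (.of_forall fun n => ?_)).trans_eq (liminf_const 2)
    have hN : (1 : ℝ) ≤ (p : ℝ) ^ n := one_le_pow₀ hp.le
    rw [Fintype.card_fin, Fintype.card_fin, ENNReal.rpow_two, ← ENNReal.ofReal_pow (by positivity),
      ← ENNReal.ofReal_natCast, ← ENNReal.ofReal_natCast (p ^ n),
      ← ENNReal.ofReal_mul (by positivity), ← ENNReal.ofReal_mul (by positivity),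
      ← ENNReal.ofReal_ofNat 2]
    refine ENNReal.ofReal_le_ofReal ?_
    push_cast
    field_simp
    linarith

end HausdorffMeasure

/-- On `X = ℝ × ℚ_p` with the maximum metric, the 2-dimensional Hausdorff measure is a
translation-invariant Borel measure, finite and positive on `[0,1] × ℤ_p`; hence it is a
Haar measure on the locally compact abelian group `X`. -/
theorem hausdorff_is_haar_mixed (p : ℕ) [Fact p.Prime]
    [MeasurableSpace (ℝ × ℚ_[p])] [BorelSpace (ℝ × ℚ_[p])] :
    (∀ (B : Set (ℝ × ℚ_[p])), MeasurableSet B → ∀ t : ℝ × ℚ_[p],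
        μH[2] ((fun x => x + t) '' B) = μH[2] B) ∧
    0 < μH[2] (Set.Icc (0:ℝ) 1 ×ˢ {x : ℚ_[p] | ‖x‖ ≤ 1}) ∧
    μH[2] (Set.Icc (0:ℝ) 1 ×ˢ {x : ℚ_[p] | ‖x‖ ≤ 1}) < ⊤ ∧
    (μH[2] : Measure (ℝ × ℚ_[p])).IsAddHaarMeasure := by
  rw [← Padic.closedBall_zero_one_eq]
  have hpos := hausdorffMeasure_Icc_prod_closedBall_pos p
  have hfin := (hausdorffMeasure_Icc_prod_closedBall_le_two p).trans_lt ENNReal.ofNat_lt_top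
  have hint : (interior (Icc (0 : ℝ) 1 ×ˢ closedBall (0 : ℚ_[p]) 1)).Nonempty := by
    rw [interior_prod_eq, interior_Icc,
      (IsUltrametricDist.isOpen_closedBall _ one_ne_zero).interior_eq]
    exact ⟨(1 / 2, 0), by norm_num, mem_closedBall_self zero_le_one⟩
  refine ⟨fun B _ t => (IsometryEquiv.addRight t).hausdorffMeasure_image 2 B, hpos, hfin, ?_⟩
  exact isAddHaarMeasure_of_isCompact_nonempty_interior _ _
    (isCompact_Icc.prod (isCompact_closedBall 0 1)) hint hpos.ne' hfin.ne
end

section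
/- The Hausdorff dimension of the space ℝ^r × ℚ_{p₁} × ⋯ × ℚ_{p_k}, equipped with the maximum metric combining the Euclidean absolute values and the normalized p_i-adic absolute values, equals r + k. -/
/-!
Lower bound: on `[0, 1)` the map reversing base-`p` digits, `∑ dₙ p^(-(n+1)) ↦ ∑ dₙ pⁿ`, does not
decrease distances into `ℚ_[p]`, since `p`-adic closeness within `p^(-v)` forces the first `v`
digits to agree. Applying it in the last `k` coordinates embeds `ℝ^r × [0, 1)^k`, a set of
dimension `r + k`, into the space without decreasing distances.

Upper bound: for `ε ≤ 1`, a ball is covered by `O(ε⁻¹)` balls of radius `ε` in `ℝ` and, using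
cosets of `p^c ℤ_[p]`, in `ℚ_[p]`; in the max metric the product of such covers covers a ball of
the whole space by `O(ε^(-(r+k)))` balls of radius `ε`, which makes `μH[r + k]` of it finite.
-/

open scoped NNReal ENNReal
open MeasureTheory Metric Set Filter Topology

namespace Metric

section BoxContent

variable {X Y : Type*} [PseudoEMetricSpace X] [PseudoEMetricSpace Y]

/-- `s` has finite `d`-dimensional upper box-counting content: it has `ε`-nets of cardinality
`O(ε ^ (-d))` as `ε → 0`. -/
def HasFiniteBoxContent (s : Set X) (d : ℝ≥0) : Prop :=
  ∃ C : ℝ≥0, ∀ ε : ℝ≥0, 0 < ε → ε ≤ 1 →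
    ∃ N : Finset X, IsCover ε s N ∧ N.card * ε ^ (d : ℝ) ≤ C

theorem HasFiniteBoxContent.mono {s t : Set X} {d : ℝ≥0} (h : HasFiniteBoxContent t d)
    (hst : s ⊆ t) : HasFiniteBoxContent s d := by
  obtain ⟨C, hC⟩ := h
  refine ⟨C, fun ε hε hε1 => ?_⟩
  obtain ⟨N, hN, hcard⟩ := hC ε hε hε1
  exact ⟨N, hN.anti hst, hcard⟩

theorem IsCover.prod {ε : ℝ≥0} {s N : Set X} {t M : Set Y} (hs : IsCover ε s N)
    (ht : IsCover ε t M) : IsCover ε (s ×ˢ t) (N ×ˢ M) := by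
  rintro ⟨x, y⟩ ⟨hx, hy⟩
  obtain ⟨x', hx', hxx'⟩ := hs hx
  obtain ⟨y', hy', hyy'⟩ := ht hy
  refine ⟨(x', y'), ⟨hx', hy'⟩, ?_⟩
  change edist (x, y) (x', y') ≤ ε
  rw [Prod.edist_eq]
  exact max_le hxx' hyy'

theorem IsCover.pi {ι : Type*} [Fintype ι] {X : ι → Type*} [∀ i, PseudoEMetricSpace (X i)]
    {ε : ℝ≥0} {s N : ∀ i, Set (X i)} (h : ∀ i, IsCover ε (s i) (N i)) :
    IsCover ε (univ.pi s) (univ.pi N) := by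
  intro x hx
  choose y hyN hxy using fun i => h i (hx i (mem_univ i))
  exact ⟨y, fun i _ => hyN i, edist_pi_le_iff.2 hxy⟩

theorem HasFiniteBoxContent.prod {s : Set X} {t : Set Y} {d₁ d₂ : ℝ≥0}
    (hs : HasFiniteBoxContent s d₁) (ht : HasFiniteBoxContent t d₂) :
    HasFiniteBoxContent (s ×ˢ t) (d₁ + d₂) := by
  obtain ⟨C₁, hC₁⟩ := hs
  obtain ⟨C₂, hC₂⟩ := ht
  refine ⟨C₁ * C₂, fun ε hε hε1 => ?_⟩
  obtain ⟨N, hN, hNcard⟩ := hC₁ ε hε hε1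
  obtain ⟨M, hM, hMcard⟩ := hC₂ ε hε hε1
  refine ⟨N ×ˢ M, by simpa using hN.prod hM, ?_⟩
  calc ((N ×ˢ M).card : ℝ≥0) * ε ^ ((d₁ + d₂ : ℝ≥0) : ℝ)
      = (N.card * ε ^ (d₁ : ℝ)) * (M.card * ε ^ (d₂ : ℝ)) := by
        rw [Finset.card_product, NNReal.coe_add, NNReal.rpow_add hε.ne']
        push_cast
        ring
    _ ≤ C₁ * C₂ := mul_le_mul' hNcard hMcard

theorem HasFiniteBoxContent.pi {ι : Type*} [Fintype ι] {X : ι → Type*}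
    [∀ i, PseudoEMetricSpace (X i)] {s : ∀ i, Set (X i)} {d : ι → ℝ≥0}
    (h : ∀ i, HasFiniteBoxContent (s i) (d i)) :
    HasFiniteBoxContent (univ.pi s) (∑ i, d i) := by
  classical
  choose C hC using h
  refine ⟨∏ i, C i, fun ε hε hε1 => ?_⟩
  choose N hN hNcard using fun i => hC i ε hε hε1
  refine ⟨Fintype.piFinset N, by simpa using IsCover.pi hN, ?_⟩
  have hpow : ε ^ ((∑ i, d i : ℝ≥0) : ℝ) = ∏ i, ε ^ (d i : ℝ) := by
    apply NNReal.coe_injective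
    push_cast
    exact Real.rpow_sum_of_pos hε _ _
  calc ((Fintype.piFinset N).card : ℝ≥0) * ε ^ ((∑ i, d i : ℝ≥0) : ℝ)
      = ∏ i, ((N i).card * ε ^ (d i : ℝ)) := by
        rw [Fintype.card_piFinset, hpow, Finset.prod_mul_distrib]
        push_cast
        rfl
    _ ≤ ∏ i, C i := Finset.prod_le_prod' fun i _ => hNcard i

end BoxContent

theorem HasFiniteBoxContent.dimH_le {X : Type*} [EMetricSpace X] {s : Set X} {d : ℝ≥0}
    (h : HasFiniteBoxContent s d) : dimH s ≤ d := by
  obtain ⟨C, hC⟩ := h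
  borelize X
  set ε : ℕ → ℝ≥0 := fun m => 2⁻¹ ^ m
  choose N hN hNcard using fun m =>
    hC (ε m) (by positivity) (pow_le_one₀ (by positivity) (by norm_num))
  have hdiam : ∀ m (y : N m), ediam (closedEBall (y : X) (ε m)) ≤ 2 * ε m :=
    fun m y => ediam_closedEBall_le
  have hsum : ∀ m, ∑ y : N m, ediam (closedEBall (y : X) (ε m)) ^ (d : ℝ) ≤ 2 ^ (d : ℝ) * C := by
    intro m
    calc ∑ y : N m, ediam (closedEBall (y : X) (ε m)) ^ (d : ℝ)
        ≤ ∑ _y : N m, (2 * (ε m : ℝ≥0∞)) ^ (d : ℝ) :=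
          Finset.sum_le_sum fun y _ => ENNReal.rpow_le_rpow (hdiam m y) d.coe_nonneg
      _ = 2 ^ (d : ℝ) * (((N m).card * ε m ^ (d : ℝ) : ℝ≥0) : ℝ≥0∞) := by
          rw [Finset.sum_const, Finset.card_univ, Fintype.card_coe, nsmul_eq_mul,
            ENNReal.mul_rpow_of_nonneg _ _ d.coe_nonneg, ENNReal.coe_mul,
            ENNReal.coe_rpow_of_nonneg _ d.coe_nonneg]
          push_cast
          ring
      _ ≤ 2 ^ (d : ℝ) * C := by gcongr; exact_mod_cast hNcard m
  have hr : Tendsto (fun m => 2 * (ε m : ℝ≥0∞)) atTop (𝓝 0) := by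
    simpa [ε, ENNReal.inv_pow] using ENNReal.Tendsto.const_mul
      (ENNReal.tendsto_pow_atTop_nhds_zero_of_lt_one (r := 2⁻¹) (by norm_num))
      (Or.inr (by norm_num : (2 : ℝ≥0∞) ≠ ⊤))
  have hμ := Measure.hausdorffMeasure_le_liminf_sum (d : ℝ) s _ hr
    (fun m (y : N m) => closedEBall (y : X) (ε m)) (Eventually.of_forall hdiam)
    (Eventually.of_forall fun m => by
      simpa [iUnion_subtype] using isCover_iff_subset_iUnion_closedEBall.1 (hN m))
  refine dimH_le_of_hausdorffMeasure_ne_top (ne_top_of_le_ne_top ?_ hμ)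
  refine ne_top_of_le_ne_top ?_
    ((liminf_le_liminf (Eventually.of_forall hsum)).trans_eq (liminf_const _))
  exact ENNReal.mul_ne_top (by simp) ENNReal.coe_ne_top

end Metric

theorem dimH_le_dimH_image_of_edist_le {X Y : Type*} [EMetricSpace X] [EMetricSpace Y]
    {f : X → Y} {s : Set X} (hf : ∀ x ∈ s, ∀ y ∈ s, edist x y ≤ edist (f x) (f y)) :
    dimH s ≤ dimH (f '' s) := by
  have hanti : AntilipschitzWith 1 fun x : s => f x := fun x y => by
    simpa [Subtype.edist_eq] using hf x x.2 y y.2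
  calc dimH s = dimH (((↑) : s → X) '' univ) := by rw [image_univ, Subtype.range_coe]
    _ = dimH (univ : Set s) := isometry_subtype_coe.dimH_image _
    _ ≤ dimH ((fun x : s => f x) '' univ) := hanti.le_dimH_image _
    _ = dimH (f '' s) := by rw [image_univ, ← image_eq_range]

namespace Real

theorem hasFiniteBoxContent_Icc (a b : ℝ) : HasFiniteBoxContent (Icc a b) 1 := by
  refine ⟨(b - a).toNNReal + 1, fun ε hε hε1 => ?_⟩
  have hε' : (0 : ℝ) < ε := hε
  set n := ⌊(b - a) / ε⌋₊
  refine ⟨(Finset.range (n + 1)).image fun j : ℕ => a + j * ε, ?_, ?_⟩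
  · refine isCover_iff_subset_iUnion_closedBall.2 fun x hx => ?_
    have hxa : 0 ≤ (x - a) / ε := div_nonneg (by linarith [hx.1]) hε'.le
    set j := ⌊(x - a) / ε⌋₊
    have hj_le : j * (ε : ℝ) ≤ x - a := (le_div_iff₀ hε').1 (Nat.floor_le hxa)
    have hj_lt : x - a < (j + 1) * ε := (div_lt_iff₀ hε').1 (Nat.lt_floor_add_one _)
    have hjn : j ≤ n :=
      Nat.floor_le_floor (div_le_div_of_nonneg_right (by linarith [hx.2]) hε'.le)
    refine mem_biUnion (Finset.mem_coe.2
      (Finset.mem_image_of_mem _ (Finset.mem_range_succ_iff.2 hjn))) ?_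
    rw [mem_closedBall, Real.dist_eq, abs_le]
    constructor <;> linarith
  · rw [NNReal.coe_one, NNReal.rpow_one, ← NNReal.coe_le_coe]
    have hcard : (((Finset.range (n + 1)).image fun j : ℕ => a + j * ε).card : ℝ) ≤ n + 1 := by
      exact_mod_cast (Finset.card_image_le).trans (Finset.card_range _).le
    have hn : (n : ℝ) * ε ≤ (b - a).toNNReal := by
      rcases le_total a b with hab | hab
      · rw [Real.coe_toNNReal _ (sub_nonneg.2 hab), ← le_div_iff₀ hε']
        exact Nat.floor_le (div_nonneg (sub_nonneg.2 hab) hε'.le)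
      · simp [n, Nat.floor_of_nonpos (div_nonpos_of_nonpos_of_nonneg (sub_nonpos.2 hab) hε'.le)]
    push_cast
    nlinarith [NNReal.coe_le_coe.2 hε1]

/-- The `(n + 1)`-st digit of `a` after the point in base `p`. -/
noncomputable def fracDigit (p n : ℕ) (a : ℝ) : ℤ := ⌊a * p ^ (n + 1)⌋ - p * ⌊a * p ^ n⌋

variable {p : ℕ}

theorem fracDigit_nonneg (n : ℕ) (a : ℝ) : 0 ≤ fracDigit p n a := by
  have : ((p * ⌊a * p ^ n⌋ : ℤ) : ℝ) ≤ a * p ^ (n + 1) := by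
    push_cast
    rw [pow_succ, mul_comm (p : ℝ), ← mul_assoc]
    exact mul_le_mul_of_nonneg_right (Int.floor_le _) (Nat.cast_nonneg p)
  rw [fracDigit, sub_nonneg]
  exact Int.le_floor.2 this

theorem fracDigit_lt (hp : 0 < p) (n : ℕ) (a : ℝ) : fracDigit p n a < p := by
  have : a * p ^ (n + 1) < ((p * ⌊a * p ^ n⌋ + p : ℤ) : ℝ) := by
    push_cast
    rw [pow_succ, ← mul_assoc, mul_comm _ (p : ℝ), ← mul_add_one]
    exact mul_lt_mul_of_pos_left (Int.lt_floor_add_one _) (by exact_mod_cast hp)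
  rw [fracDigit, sub_lt_iff_lt_add']
  exact Int.floor_lt.2 this

theorem floor_mul_pow_eq_of_fracDigit_eq {a b : ℝ} {v : ℕ} (hab : ⌊a⌋ = ⌊b⌋)
    (h : ∀ n < v, fracDigit p n a = fracDigit p n b) : ⌊a * p ^ v⌋ = ⌊b * p ^ v⌋ := by
  induction v with
  | zero => simpa using hab
  | succ v ih =>
    have hv := h v v.lt_succ_self
    rw [fracDigit, fracDigit, ih fun n hn => h n (hn.trans v.lt_succ_self)] at hv
    linarith

noncomputable def reversedDigitSum (p v : ℕ) (a : ℝ) : ℤ :=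
  ∑ n ∈ Finset.range v, fracDigit p n a * p ^ n

theorem reversedDigitSum_succ (v : ℕ) (a : ℝ) :
    reversedDigitSum p (v + 1) a = reversedDigitSum p v a + fracDigit p v a * p ^ v :=
  Finset.sum_range_succ _ _

theorem reversedDigitSum_nonneg (v : ℕ) (a : ℝ) : 0 ≤ reversedDigitSum p v a :=
  Finset.sum_nonneg fun n _ => mul_nonneg (fracDigit_nonneg n a) (by positivity)

theorem reversedDigitSum_lt (hp : 0 < p) (v : ℕ) (a : ℝ) : reversedDigitSum p v a < p ^ v := by
  induction v with
  | zero => simp [reversedDigitSum]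
  | succ v ih =>
    rw [reversedDigitSum_succ, pow_succ]
    have : fracDigit p v a * (p : ℤ) ^ v ≤ (p - 1) * p ^ v :=
      mul_le_mul_of_nonneg_right (by linarith [fracDigit_lt hp v a]) (by positivity)
    linarith

end Real

namespace Padic

open Real

variable {p : ℕ} [hp : Fact p.Prime]

theorem exists_lt_pow_norm_sub_natCast_mul_le {y : ℚ_[p]} {n : ℕ} (hy : ‖y‖ ≤ (p : ℝ) ^ n) (c : ℕ) :
    ∃ a < p ^ (n + c), ‖y - a * (p : ℚ_[p]) ^ (-n : ℤ)‖ ≤ (p : ℝ) ^ (-c : ℤ) := by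
  have hp0 : (p : ℝ) ≠ 0 := by exact_mod_cast hp.out.ne_zero
  have hz : ‖y * (p : ℚ_[p]) ^ n‖ ≤ 1 := by
    rw [norm_mul, norm_p_pow, zpow_neg, zpow_natCast, ← div_eq_mul_inv]
    exact div_le_one_of_le₀ hy (by positivity)
  set z : ℤ_[p] := ⟨y * (p : ℚ_[p]) ^ n, hz⟩
  refine ⟨z.appr (n + c), z.appr_lt _, ?_⟩
  have happr : ‖z - z.appr (n + c)‖ ≤ (p : ℝ) ^ (-(n + c : ℕ) : ℤ) :=
    (PadicInt.norm_le_pow_iff_mem_span_pow _ _).2 (PadicInt.appr_spec _ _)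
  have hy_eq : y - z.appr (n + c) * (p : ℚ_[p]) ^ (-n : ℤ) =
      ((z - z.appr (n + c) : ℤ_[p]) : ℚ_[p]) * (p : ℚ_[p]) ^ (-n : ℤ) := by
    have : (p : ℚ_[p]) ^ n ≠ 0 := pow_ne_zero _ (by exact_mod_cast hp.out.ne_zero)
    have hz_coe : (z : ℚ_[p]) = y * p ^ n := rfl
    rw [PadicInt.coe_sub, PadicInt.coe_natCast, hz_coe, zpow_neg, zpow_natCast]
    field_simp
  rw [hy_eq, norm_mul, PadicInt.padic_norm_e_of_padicInt, norm_p_zpow, neg_neg]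
  calc ‖z - z.appr (n + c)‖ * (p : ℝ) ^ (n : ℤ)
      ≤ (p : ℝ) ^ (-(n + c : ℕ) : ℤ) * (p : ℝ) ^ (n : ℤ) := by gcongr
    _ = (p : ℝ) ^ (-c : ℤ) := by rw [← zpow_add₀ hp0]; push_cast; ring_nf

theorem hasFiniteBoxContent_closedBall_pow (n : ℕ) :
    HasFiniteBoxContent (closedBall (0 : ℚ_[p]) (p ^ n)) 1 := by
  classical
  have hp1 : (1 : ℝ) < p := by exact_mod_cast hp.out.one_lt
  refine ⟨(p : ℝ≥0) ^ (n + 1), fun ε hε hε1 => ?_⟩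
  have hε' : (0 : ℝ) < ε := hε
  obtain ⟨m, hpm, hpm1⟩ := exists_nat_pow_near (one_le_inv₀ hε' |>.2 hε1) hp1
  refine ⟨(Finset.range (p ^ (n + (m + 1)))).image fun a : ℕ => a * (p : ℚ_[p]) ^ (-n : ℤ),
    isCover_iff_subset_iUnion_closedBall.2 fun y hy => ?_, ?_⟩
  · rw [mem_closedBall_zero_iff] at hy
    obtain ⟨a, ha, hya⟩ := exists_lt_pow_norm_sub_natCast_mul_le hy (m + 1)
    refine mem_biUnion (Finset.mem_coe.2 (Finset.mem_image_of_mem _ (Finset.mem_range.2 ha))) ?_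
    rw [mem_closedBall, dist_eq_norm]
    refine hya.trans ?_
    rw [zpow_neg, zpow_natCast]
    exact inv_le_of_inv_le₀ hε' hpm1.le
  · rw [NNReal.coe_one, NNReal.rpow_one, ← NNReal.coe_le_coe]
    have hcard : (((Finset.range (p ^ (n + (m + 1)))).image
        fun a : ℕ => a * (p : ℚ_[p]) ^ (-n : ℤ)).card : ℝ) ≤ (p : ℝ) ^ (n + 1) * p ^ m := by
      rw [← pow_add, show n + 1 + m = n + (m + 1) by ring]
      exact_mod_cast (Finset.card_image_le).trans (Finset.card_range _).le
    have hpmε : (p : ℝ) ^ m * ε ≤ 1 := (le_div_iff₀ hε').1 (one_div (ε : ℝ) ▸ hpm)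
    push_cast
    calc _ ≤ (p : ℝ) ^ (n + 1) * p ^ m * ε := by gcongr
      _ ≤ (p : ℝ) ^ (n + 1) := by
        rw [mul_assoc]; exact mul_le_of_le_one_right (by positivity) hpmε

theorem hasFiniteBoxContent_closedBall (R : ℝ) :
    HasFiniteBoxContent (closedBall (0 : ℚ_[p]) R) 1 := by
  obtain ⟨n, hn⟩ := pow_unbounded_of_one_lt R (by exact_mod_cast hp.out.one_lt : (1 : ℝ) < p)
  exact (hasFiniteBoxContent_closedBall_pow n).mono (closedBall_subset_closedBall hn.le)


/-- Reverses the base-`p` expansion of the fractional part: `∑ₙ dₙ p^(-(n+1)) ↦ ∑ₙ dₙ pⁿ`. -/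
noncomputable def digitReversal (p : ℕ) [Fact p.Prime] (a : ℝ) : ℚ_[p] :=
  ∑' n, (fracDigit p n a : ℚ_[p]) * p ^ n

theorem norm_fracDigit_mul_pow_le (n : ℕ) (a : ℝ) :
    ‖(fracDigit p n a : ℚ_[p]) * p ^ n‖ ≤ (p : ℝ) ^ (-n : ℤ) := by
  rw [norm_mul, norm_p_pow]
  exact mul_le_of_le_one_left (by positivity) (norm_int_le_one _)

theorem norm_digitReversal_sub_reversedDigitSum_le (v : ℕ) (a : ℝ) :
    ‖digitReversal p a - reversedDigitSum p v a‖ ≤ (p : ℝ) ^ (-v : ℤ) := by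
  have hp1 : (1 : ℝ) ≤ p := by exact_mod_cast hp.out.one_le
  have hsum : Summable fun n => (fracDigit p n a : ℚ_[p]) * p ^ n := by
    refine Summable.of_norm_bounded ?_ fun n => norm_fracDigit_mul_pow_le n a
    simpa using summable_geometric_of_lt_one (by positivity) (inv_lt_one_of_one_lt₀
      (by exact_mod_cast hp.out.one_lt : (1 : ℝ) < p))
  rw [digitReversal, ← hsum.sum_add_tsum_nat_add v, reversedDigitSum]
  push_cast
  rw [add_sub_cancel_left]
  refine IsUltrametricDist.norm_tsum_le_of_forall_le_of_nonneg (by positivity) fun n => ?_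
  exact (norm_fracDigit_mul_pow_le _ a).trans
    (zpow_le_zpow_right₀ hp1 (by omega))

theorem reversedDigitSum_eq_of_norm_sub_le {a b : ℝ} {v : ℕ}
    (h : ‖digitReversal p a - digitReversal p b‖ ≤ (p : ℝ) ^ (-v : ℤ)) :
    reversedDigitSum p v a = reversedDigitSum p v b := by
  have hdist : ‖((reversedDigitSum p v a - reversedDigitSum p v b : ℤ) : ℚ_[p])‖ ≤
      (p : ℝ) ^ (-v : ℤ) := by
    push_cast
    rw [← dist_eq_norm]
    refine (dist_triangle_max _ (digitReversal p a) _).trans (max_le ?_ ?_)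
    · rw [dist_comm, dist_eq_norm]
      exact norm_digitReversal_sub_reversedDigitSum_le v a
    refine (dist_triangle_max _ (digitReversal p b) _).trans (max_le ?_ ?_)
    · rwa [dist_eq_norm]
    · rw [dist_eq_norm]
      exact norm_digitReversal_sub_reversedDigitSum_le v b
  have hdvd := (norm_int_le_pow_iff_dvd _ v).1 hdist
  have hlt : |reversedDigitSum p v a - reversedDigitSum p v b| < p ^ v := by
    have := reversedDigitSum_lt hp.out.pos v a
    have := reversedDigitSum_lt hp.out.pos v b
    have := reversedDigitSum_nonneg (p := p) v a
    have := reversedDigitSum_nonneg (p := p) v b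
    rw [abs_lt]; constructor <;> linarith
  exact sub_eq_zero.1 (Int.eq_zero_of_abs_lt_dvd (by exact_mod_cast hdvd) (by exact_mod_cast hlt))

theorem fracDigit_eq_of_norm_sub_le {a b : ℝ} {v : ℕ}
    (h : ‖digitReversal p a - digitReversal p b‖ ≤ (p : ℝ) ^ (-v : ℤ)) {n : ℕ} (hn : n < v) :
    fracDigit p n a = fracDigit p n b := by
  have hle : ∀ w ≤ v, reversedDigitSum p w a = reversedDigitSum p w b := fun w hw =>
    reversedDigitSum_eq_of_norm_sub_le (h.trans
      (zpow_le_zpow_right₀ (by exact_mod_cast hp.out.one_le) (by omega)))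
  have hsucc := hle (n + 1) hn
  rw [reversedDigitSum_succ, reversedDigitSum_succ, hle n hn.le, add_right_inj] at hsucc
  exact mul_right_cancel₀ (pow_ne_zero _ (by exact_mod_cast hp.out.ne_zero)) hsucc

theorem abs_sub_lt_of_norm_digitReversal_sub_le {a b : ℝ} (ha : a ∈ Ico (0 : ℝ) 1)
    (hb : b ∈ Ico (0 : ℝ) 1) {v : ℕ}
    (h : ‖digitReversal p a - digitReversal p b‖ ≤ (p : ℝ) ^ (-v : ℤ)) :
    |a - b| < (p : ℝ) ^ (-v : ℤ) := by
  have hfloor : ⌊a⌋ = ⌊b⌋ := by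
    rw [Int.floor_eq_zero_iff.2 ha, Int.floor_eq_zero_iff.2 hb]
  have := Int.abs_sub_lt_one_of_floor_eq_floor
    (floor_mul_pow_eq_of_fracDigit_eq hfloor fun n hn => fracDigit_eq_of_norm_sub_le h hn)
  have hpv : (0 : ℝ) < p ^ v := pow_pos (by exact_mod_cast hp.out.pos) v
  rw [← sub_mul, abs_mul, abs_of_pos hpv] at this
  rwa [zpow_neg, zpow_natCast, ← one_div, lt_div_iff₀ hpv]

theorem dist_le_dist_digitReversal {a b : ℝ} (ha : a ∈ Ico (0 : ℝ) 1) (hb : b ∈ Ico (0 : ℝ) 1) :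
    dist a b ≤ dist (digitReversal p a) (digitReversal p b) := by
  have hp1 : (1 : ℝ) < p := by exact_mod_cast hp.out.one_lt
  rw [Real.dist_eq, dist_eq_norm]
  set q := digitReversal p a - digitReversal p b
  rcases eq_or_ne q 0 with hq | hq
  · rw [hq, norm_zero]
    by_contra! hab
    obtain ⟨v, hv⟩ := exists_pow_lt_of_lt_one hab (inv_lt_one_of_one_lt₀ hp1)
    have := abs_sub_lt_of_norm_digitReversal_sub_le ha hb (p := p) (v := v)
      (by change ‖q‖ ≤ _; rw [hq, norm_zero]; positivity)
    rw [zpow_neg, zpow_natCast, ← inv_pow] at this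
    linarith
  rw [norm_eq_zpow_neg_valuation hq]
  rcases lt_or_ge q.valuation 0 with hneg | hnonneg
  · have habs : |a - b| < 1 := by
      rw [abs_lt]; constructor <;> linarith [ha.1, ha.2, hb.1, hb.2]
    exact habs.le.trans (one_le_zpow₀ hp1.le (by omega))
  · obtain ⟨v, hv⟩ := Int.eq_ofNat_of_zero_le hnonneg
    rw [hv]
    refine (abs_sub_lt_of_norm_digitReversal_sub_le ha hb ?_).le
    rw [norm_eq_zpow_neg_valuation hq, hv]

end Padic

theorem hasFiniteBoxContent_closedBall_mixed (r k : ℕ) (p : Fin k → ℕ) [∀ i, Fact (p i).Prime]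
    (n : ℕ) :
    HasFiniteBoxContent (closedBall (0 : (Fin r → ℝ) × ((i : Fin k) → ℚ_[p i])) n) (r + k) := by
  rw [← Prod.mk_zero_zero, ← closedBall_prod_same, closedBall_pi _ n.cast_nonneg,
    closedBall_pi _ n.cast_nonneg]
  have hreal : HasFiniteBoxContent (closedBall (0 : ℝ) n) 1 := by
    simpa [Real.closedBall_eq_Icc] using Real.hasFiniteBoxContent_Icc (-n) n
  convert (HasFiniteBoxContent.pi fun _ : Fin r => hreal).prod
    (HasFiniteBoxContent.pi fun i => Padic.hasFiniteBoxContent_closedBall (p := p i) n)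
    using 1 <;> simp

theorem natCast_add_le_dimH_mixed (r k : ℕ) (p : Fin k → ℕ) [∀ i, Fact (p i).Prime] :
    ((r + k : ℕ) : ℝ≥0∞) ≤ dimH (univ : Set ((Fin r → ℝ) × ((i : Fin k) → ℚ_[p i]))) := by
  set B : Set ((Fin r → ℝ) × (Fin k → ℝ)) := univ ×ˢ univ.pi fun _ => Ico 0 1
  set F : (Fin r → ℝ) × (Fin k → ℝ) → (Fin r → ℝ) × ((i : Fin k) → ℚ_[p i]) :=
    Prod.map id fun y i => Padic.digitReversal (p i) (y i)
  have hexp : ∀ u ∈ B, ∀ w ∈ B, edist u w ≤ edist (F u) (F w) := by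
    rintro ⟨x, y⟩ ⟨-, hy⟩ ⟨x', y'⟩ ⟨-, hy'⟩
    simp only [F, Prod.edist_eq, Prod.map]
    refine max_le_max le_rfl (edist_pi_le_iff.2 fun i => ?_)
    refine le_trans ?_ (edist_le_pi_edist _ _ i)
    rw [edist_dist, edist_dist]
    exact ENNReal.ofReal_le_ofReal
      (Padic.dist_le_dist_digitReversal (hy i (mem_univ i)) (hy' i (mem_univ i)))
  have hB : dimH B = ((r + k : ℕ) : ℝ≥0∞) := by
    rw [Real.dimH_of_nonempty_interior, Module.finrank_prod, Module.finrank_fin_fun,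
      Module.finrank_fin_fun]
    refine ⟨(0, fun _ => 1 / 2), ?_⟩
    rw [interior_prod_eq, interior_pi_set finite_univ]
    refine ⟨by simp, fun i _ => ?_⟩
    show (1 / 2 : ℝ) ∈ interior (Ico 0 1)
    rw [interior_Ico]
    constructor <;> norm_num
  calc ((r + k : ℕ) : ℝ≥0∞) = dimH B := hB.symm
    _ ≤ dimH (F '' B) := dimH_le_dimH_image_of_edist_le hexp
    _ ≤ dimH univ := dimH_mono (subset_univ _)

/-- The Hausdorff dimension of `ℝ^r × ℚ_{p₁} × ⋯ × ℚ_{p_k}`, with the maximum metric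
combining the Euclidean absolute values and the normalized `p_i`-adic absolute values,
equals `r + k`. -/
theorem dimH_mixed (r k : ℕ) (p : Fin k → ℕ) [∀ i, Fact (p i).Prime] :
    dimH (Set.univ : Set ((Fin r → ℝ) × ((i : Fin k) → ℚ_[p i]))) = r + k := by
  refine le_antisymm ?_ (by exact_mod_cast natCast_add_le_dimH_mixed r k p)
  rw [← Metric.iUnion_closedBall_nat 0, dimH_iUnion]
  exact iSup_le fun n => by
    simpa using (hasFiniteBoxContent_closedBall_mixed r k p n).dimH_le
end

section
/- The singular value function is submultiplicative: for any two nonsingular contracting diagonal linear maps T, U on X = ℝ^r × ℚ_{p₁} × ⋯ × ℚ_{p_k} and any q ≥ 0, Φ^q(T ∘ U) ≤ Φ^q(T) · Φ^q(U). -/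
open Finset

/-- The singular values `a` sorted in descending order, extended by `1` beyond index `m`:
`descSV m a n` is the `(n+1)`-st largest singular value (0-based). -/
noncomputable def descSV (m : ℕ) (a : Fin m → ℝ) : ℕ → ℝ :=
  fun n => if h : n < m then a (Tuple.sort a (Fin.rev ⟨n, h⟩)) else 1

/-- The singular values `a` sorted in ascending order, extended by `1` beyond index `m`. -/
noncomputable def ascSV (m : ℕ) (a : Fin m → ℝ) : ℕ → ℝ :=
  fun n => if h : n < m then a (Tuple.sort a ⟨n, h⟩) else 1

/-- The singular value function `Φ^q`: with descending singular values
`α₁ ≥ … ≥ α_m`, `Φ^q = α₁⋯α_{j-1}·α_j^{q-j+1}` for `j-1 < q ≤ j`, `Φ^0 = 1`, and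
`Φ^q = (α₁⋯α_m)^{q/m}` for `q > m`. -/
noncomputable def svPhi (m : ℕ) (a : Fin m → ℝ) (q : ℝ) : ℝ :=
  if q = 0 then 1
  else if q ≤ m then
    (∏ i ∈ Finset.range (⌈q⌉₊ - 1), descSV m a i) *
      (descSV m a (⌈q⌉₊ - 1)) ^ (q - (⌈q⌉₊ : ℝ) + 1)
  else (∏ i ∈ Finset.range m, descSV m a i) ^ (q / (m : ℝ))

/-- The lower singular value function `Ψ^q`, built from the ascending tail of the
singular values: `Ψ^q = α_m⋯α_{m-j+2}·α_{m-j+1}^{q-j+1}` for `j-1 < q ≤ j`, `Ψ^0 = 1`. -/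
noncomputable def svPsi (m : ℕ) (a : Fin m → ℝ) (q : ℝ) : ℝ :=
  if q = 0 then 1
  else if q ≤ m then
    (∏ i ∈ Finset.range (⌈q⌉₊ - 1), ascSV m a i) *
      (ascSV m a (⌈q⌉₊ - 1)) ^ (q - (⌈q⌉₊ : ℝ) + 1)
  else (∏ i ∈ Finset.range m, ascSV m a i) ^ (q / (m : ℝ))

/-- The set of indices carrying the `n` largest values of `c`. -/
noncomputable def topSet (m n : ℕ) (c : Fin m → ℝ) : Finset (Fin m) :=
  (Finset.univ.filter (fun j : Fin m => m - n ≤ j.val)).image (Tuple.sort c)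

lemma descSV_pos {m : ℕ} {c : Fin m → ℝ} (hc : ∀ i, 0 < c i) (n : ℕ) :
    0 < descSV m c n := by
  unfold descSV
  split
  · exact hc _
  · exact one_pos

lemma prod_descSV_pos {m : ℕ} {c : Fin m → ℝ} (hc : ∀ i, 0 < c i) (n : ℕ) :
    0 < ∏ i ∈ Finset.range n, descSV m c i :=
  Finset.prod_pos fun i _ => descSV_pos hc i

lemma card_topSet {m n : ℕ} (hn : n ≤ m) (c : Fin m → ℝ) :
    (topSet m n c).card = n := by
  unfold topSet
  rw [Finset.card_image_of_injective _ (Tuple.sort c).injective]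
  rcases Nat.eq_zero_or_pos n with hn0 | hn0
  · subst hn0
    rw [Finset.filter_false_of_mem (fun x _ => by have := x.isLt; omega),
      Finset.card_empty]
  · have hm : 0 < m := lt_of_lt_of_le hn0 hn
    have hset : (Finset.univ.filter (fun j : Fin m => m - n ≤ j.val)) =
        Finset.Ici (⟨m - n, by omega⟩ : Fin m) := by
      ext x
      simp [Fin.le_def]
    rw [hset, Fin.card_Ici]
    simp only [Fin.val_mk]
    omega

lemma prod_descSV_eq {m n : ℕ} (hn : n ≤ m) (c : Fin m → ℝ) :
    ∏ i ∈ Finset.range n, descSV m c i = ∏ j ∈ topSet m n c, c j := by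
  unfold topSet
  rw [Finset.prod_image (fun x _ y _ h => (Tuple.sort c).injective h)]
  rcases Nat.eq_zero_or_pos n with hn0 | hn0
  · subst hn0
    rw [Finset.filter_false_of_mem (fun x _ => by have := x.isLt; omega)]
    simp
  · have hm : 0 < m := lt_of_lt_of_le hn0 hn
    refine Finset.prod_nbij' (fun i => (⟨m - 1 - i, by omega⟩ : Fin m))
      (fun x => m - 1 - x.val) ?_ ?_ ?_ ?_ ?_
    · intro i hi
      simp only [Finset.mem_range] at hi
      simp only [Finset.mem_filter, Finset.mem_univ, true_and]
      omega
    · intro x hx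
      simp only [Finset.mem_filter, Finset.mem_univ, true_and] at hx
      simp only [Finset.mem_range]
      have := x.isLt
      omega
    · intro i hi
      simp only [Finset.mem_range] at hi
      simp
      omega
    · intro x hx
      simp only [Finset.mem_filter, Finset.mem_univ, true_and] at hx
      have := x.isLt
      apply Fin.ext
      simp
      omega
    · intro i hi
      simp only [Finset.mem_range] at hi
      have hilt : i < m := lt_of_lt_of_le hi hn
      unfold descSV
      rw [dif_pos hilt]
      exact congrArg (fun z => c (Tuple.sort c z))
        (Fin.ext (by simp [Fin.val_rev]; omega))

lemma prod_le_prod_descSV {m : ℕ} {c : Fin m → ℝ} (hc : ∀ i, 0 < c i)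
    (S : Finset (Fin m)) :
    ∏ i ∈ S, c i ≤ ∏ i ∈ Finset.range S.card, descSV m c i := by
  set n := S.card with hn
  have hnm : n ≤ m := by
    have := Finset.card_le_univ S
    simpa using this
  set T := topSet m n c with hT
  have hTcard : T.card = n := card_topSet hnm c
  rw [prod_descSV_eq hnm]
  have key : ∀ x ∈ S \ T, ∀ y ∈ T \ S, c x ≤ c y := by
    intro x hx y hy
    simp only [Finset.mem_sdiff] at hx hy
    have hyT := hy.1
    have hxT := hx.2
    rw [hT, topSet, Finset.mem_image] at hyT hxT
    obtain ⟨ky, hky, hkye⟩ := hyT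
    simp only [Finset.mem_filter, Finset.mem_univ, true_and] at hky
    have hxk : ¬ (m - n ≤ ((Tuple.sort c).symm x : Fin m).val) := by
      intro h
      exact hxT ⟨(Tuple.sort c).symm x,
        by simp only [Finset.mem_filter, Finset.mem_univ, true_and]; exact h, by simp⟩
    have hle : ((Tuple.sort c).symm x : Fin m) ≤ ky := by
      rw [Fin.le_def]; omega
    have := Tuple.monotone_sort c hle
    simpa [hkye] using this
  have hcard : (S \ T).card = (T \ S).card := by
    rw [Finset.card_sdiff_comm]
    omega
  have hsub : ∏ x ∈ S \ T, c x ≤ ∏ y ∈ T \ S, c y := by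
    have e := Finset.equivOfCardEq hcard
    calc ∏ x ∈ S \ T, c x = ∏ x : {x // x ∈ S \ T}, c x := (Finset.prod_coe_sort _ _).symm
      _ ≤ ∏ x : {x // x ∈ S \ T}, c (e x) := by
          apply Finset.prod_le_prod
          · intro i _; exact (hc _).le
          · intro i _; exact key i i.2 (e i) (e i).2
      _ = ∏ y : {y // y ∈ T \ S}, c y := Equiv.prod_comp e (fun y => c ↑y)
      _ = ∏ y ∈ T \ S, c y := Finset.prod_coe_sort _ _
  have h1 : (∏ x ∈ S \ T, c x) * ∏ x ∈ S ∩ T, c x = ∏ x ∈ S, c x := by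
    rw [← Finset.sdiff_inter_self_left S T]
    exact Finset.prod_sdiff Finset.inter_subset_left
  have h2 : (∏ x ∈ T \ S, c x) * ∏ x ∈ T ∩ S, c x = ∏ x ∈ T, c x := by
    rw [← Finset.sdiff_inter_self_left T S]
    exact Finset.prod_sdiff Finset.inter_subset_left
  rw [← h1, ← h2, Finset.inter_comm T S]
  apply mul_le_mul_of_nonneg_right hsub
  exact Finset.prod_nonneg fun i _ => (hc _).le

lemma prod_descSV_mul_le {m n : ℕ} (hn : n ≤ m) {a b : Fin m → ℝ}
    (ha : ∀ i, 0 < a i) (hb : ∀ i, 0 < b i) :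
    ∏ i ∈ Finset.range n, descSV m (fun i => a i * b i) i ≤
      (∏ i ∈ Finset.range n, descSV m a i) * ∏ i ∈ Finset.range n, descSV m b i := by
  rw [prod_descSV_eq hn]
  set T := topSet m n (fun i => a i * b i) with hT
  have hTcard : T.card = n := card_topSet hn _
  rw [Finset.prod_mul_distrib]
  have h1 : ∏ i ∈ T, a i ≤ ∏ i ∈ Finset.range n, descSV m a i := by
    have := prod_le_prod_descSV ha T
    rwa [hTcard] at this
  have h2 : ∏ i ∈ T, b i ≤ ∏ i ∈ Finset.range n, descSV m b i := by
    have := prod_le_prod_descSV hb T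
    rwa [hTcard] at this
  exact mul_le_mul h1 h2 (Finset.prod_nonneg fun i _ => (hb _).le)
    (le_of_lt (prod_descSV_pos ha n))

lemma prod_descSV_univ {m : ℕ} (c : Fin m → ℝ) :
    ∏ i ∈ Finset.range m, descSV m c i = ∏ i : Fin m, c i := by
  rw [prod_descSV_eq le_rfl]
  have : topSet m m c = Finset.univ := by
    ext x
    simp only [topSet, Finset.mem_image, Finset.mem_filter, Finset.mem_univ, true_and,
      iff_true]
    exact ⟨(Tuple.sort c).symm x, by omega, by simp⟩
  rw [this]

lemma interp_aux {x y x' y' : ℝ} (hx : 0 < x) (hy : 0 < y) (hx' : 0 < x') (hy' : 0 < y')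
    {e : ℝ} (he0 : 0 ≤ e) (he1 : e ≤ 1) (h1 : x ≤ x') (h2 : x * y ≤ x' * y') :
    x * y ^ e ≤ x' * y' ^ e := by
  have key : ∀ u v : ℝ, 0 < u → 0 < v → u * v ^ e = u ^ (1 - e) * (u * v) ^ e := by
    intro u v hu hv
    rw [Real.mul_rpow hu.le hv.le, ← mul_assoc, ← Real.rpow_add hu]
    norm_num
  rw [key x y hx hy, key x' y' hx' hy']
  apply mul_le_mul
  · exact Real.rpow_le_rpow hx.le h1 (by linarith)
  · exact Real.rpow_le_rpow (by positivity) h2 he0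
  · positivity
  · positivity

/-- The singular value function is submultiplicative: for nonsingular contracting diagonal
linear maps `T, U` on `X = ℝ^r × ℚ_{p₁} × ⋯ × ℚ_{p_k}` (with coordinate absolute values
`a`, `b`; the composition `T ∘ U` has coordinate absolute values `a·b`) and any `q ≥ 0`,
`Φ^q(T ∘ U) ≤ Φ^q(T)·Φ^q(U)`. -/
theorem svPhi_submultiplicative (r k : ℕ) (a b : Fin (r + k) → ℝ)
    (ha : ∀ i, 0 < a i ∧ a i < 1) (hb : ∀ i, 0 < b i ∧ b i < 1)
    (q : ℝ) (hq : 0 ≤ q) :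
    svPhi (r + k) (fun i => a i * b i) q ≤ svPhi (r + k) a q * svPhi (r + k) b q := by
  have ha' : ∀ i, 0 < a i := fun i => (ha i).1
  have hb' : ∀ i, 0 < b i := fun i => (hb i).1
  have hab : ∀ i, 0 < a i * b i := fun i => mul_pos (ha' i) (hb' i)
  unfold svPhi
  rcases eq_or_ne q 0 with hq0 | hq0
  · simp [hq0]
  rw [if_neg hq0, if_neg hq0, if_neg hq0]
  have hqpos : 0 < q := lt_of_le_of_ne hq (Ne.symm hq0)
  by_cases hqm : q ≤ ((r + k : ℕ) : ℝ)
  · rw [if_pos hqm, if_pos hqm, if_pos hqm]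
    set n := ⌈q⌉₊ with hn
    have hn1 : 1 ≤ n := Nat.one_le_iff_ne_zero.mpr (by
      simp [hn, Nat.ceil_eq_zero, not_le, hqpos])
    have hnm : n ≤ (r + k) := Nat.ceil_le.mpr (by exact_mod_cast hqm)
    set e := q - (n : ℝ) + 1 with he
    have he0 : 0 ≤ e := by
      have := Nat.ceil_lt_add_one hq
      rw [← hn] at this
      simp only [he]
      linarith
    have he1 : e ≤ 1 := by
      have := Nat.le_ceil q
      rw [← hn] at this
      simp only [he]
      linarith
    have hrange : n = (n - 1) + 1 := by omega
    have hB1 := prod_descSV_mul_le (show n - 1 ≤ (r + k) by omega) ha' hb'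
    have hB2 := prod_descSV_mul_le hnm ha' hb'
    have hsucc : ∀ c : Fin (r + k) → ℝ, ∏ i ∈ Finset.range n, descSV (r + k) c i =
        (∏ i ∈ Finset.range (n - 1), descSV (r + k) c i) * descSV (r + k) c (n - 1) := by
      intro c
      conv_lhs => rw [hrange]
      rw [Finset.prod_range_succ]
    have main : (∏ i ∈ Finset.range (n - 1), descSV (r + k) (fun i => a i * b i) i) *
        descSV (r + k) (fun i => a i * b i) (n - 1) ^ e ≤
        ((∏ i ∈ Finset.range (n - 1), descSV (r + k) a i) * ∏ i ∈ Finset.range (n - 1), descSV (r + k) b i) *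
          (descSV (r + k) a (n - 1) * descSV (r + k) b (n - 1)) ^ e := by
      apply interp_aux (prod_descSV_pos hab _) (descSV_pos hab _)
        (mul_pos (prod_descSV_pos ha' _) (prod_descSV_pos hb' _))
        (mul_pos (descSV_pos ha' _) (descSV_pos hb' _)) he0 he1 hB1
      calc (∏ i ∈ Finset.range (n - 1), descSV (r + k) (fun i => a i * b i) i) *
            descSV (r + k) (fun i => a i * b i) (n - 1)
          = ∏ i ∈ Finset.range n, descSV (r + k) (fun i => a i * b i) i := (hsucc _).symm
        _ ≤ (∏ i ∈ Finset.range n, descSV (r + k) a i) * ∏ i ∈ Finset.range n, descSV (r + k) b i := hB2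
        _ = _ := by rw [hsucc a, hsucc b]; ring
    calc (∏ i ∈ Finset.range (n - 1), descSV (r + k) (fun i => a i * b i) i) *
          descSV (r + k) (fun i => a i * b i) (n - 1) ^ e
        ≤ ((∏ i ∈ Finset.range (n - 1), descSV (r + k) a i) * ∏ i ∈ Finset.range (n - 1), descSV (r + k) b i) *
          (descSV (r + k) a (n - 1) * descSV (r + k) b (n - 1)) ^ e := main
      _ = _ := by
          rw [Real.mul_rpow (descSV_pos ha' _).le (descSV_pos hb' _).le]
          ring
  · rw [if_neg hqm, if_neg hqm, if_neg hqm]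
    rw [prod_descSV_univ, prod_descSV_univ, prod_descSV_univ]
    rw [Finset.prod_mul_distrib]
    rw [Real.mul_rpow (Finset.prod_nonneg fun i _ => (ha' i).le)
      (Finset.prod_nonneg fun i _ => (hb' i).le)]
end

section
/- Let λ = (3+√17)/2 and consider the GIFS contraction T on ℝ × ℚ_2 with singular values |κ| = 2/λ and ‖λ‖_2 = 1/2, and a strongly connected GIFS whose adjacency matrix has spectral radius 2. Then the unique q > 0 solving Φ^q(T)·2 = 1 is q = 1 + log(√17 − 3)/log 2 ≈ 1.1675, and the unique q > 0 solving Ψ^q(T)·2 = 1 is q = 1. -/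
open Finset

lemma sort_two' {a : Fin 2 → ℝ} (h : a 1 < a 0) :
    Tuple.sort a 0 = 1 ∧ Tuple.sort a 1 = 0 := by
  set σ := Tuple.sort a with hσ
  have hm : a (σ 0) ≤ a (σ 1) := Tuple.monotone_sort a (by norm_num : (0:Fin 2) ≤ 1)
  have hne : σ 0 ≠ σ 1 := fun he => by simpa using σ.injective he
  have h0 : σ 0 = 0 ∨ σ 0 = 1 := by omega
  have h1 : σ 1 = 0 ∨ σ 1 = 1 := by omega
  rcases h0 with h0 | h0 <;> rcases h1 with h1 | h1
  · exact absurd (h0.trans h1.symm) hne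
  · simp_all <;> linarith
  · simp_all <;> linarith
  · exact absurd (h0.trans h1.symm) hne

set_option maxHeartbeats 1000000

/-- For the GIFS contraction `T` on `ℝ × ℚ_2` with singular values `α₁ = 2/λ`
(`λ = (3+√17)/2`, so `α₁ = (√17−3)·…` with `2/λ = (√17−3)/2·… ≈ 0.5616`) and
`α₂ = ‖λ‖₂ = 1/2`, and a strongly connected GIFS whose adjacency matrix has spectral
radius `2`: the unique `q > 0` solving `Φ^q(T)·2 = 1` is
`q = 1 + log(√17−3)/log 2 ≈ 1.1675`, and the unique `q > 0` solving `Ψ^q(T)·2 = 1` is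
`q = 1`. -/
theorem boundary_gifs_dimensions :
    (∃! q : ℝ, 0 < q ∧ svPhi 2 ![2 / ((3 + Real.sqrt 17) / 2), 1 / 2] q * 2 = 1) ∧
    svPhi 2 ![2 / ((3 + Real.sqrt 17) / 2), 1 / 2]
      (1 + Real.log (Real.sqrt 17 - 3) / Real.log 2) * 2 = 1 ∧
    (∃! q : ℝ, 0 < q ∧ svPsi 2 ![2 / ((3 + Real.sqrt 17) / 2), 1 / 2] q * 2 = 1) ∧
    svPsi 2 ![2 / ((3 + Real.sqrt 17) / 2), 1 / 2] 1 * 2 = 1 := by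
  set s := Real.sqrt 17 with hs
  have hs2 : s ^ 2 = 17 := Real.sq_sqrt (by norm_num)
  have hs4 : 4 < s := by nlinarith [Real.sqrt_nonneg 17]
  have hs5 : s < 5 := by nlinarith [Real.sqrt_nonneg 17]
  set a : Fin 2 → ℝ := ![2 / ((3 + s) / 2), 1 / 2] with haa
  have ha0 : a 0 = (s - 3) / 2 := by
    show (2 : ℝ) / ((3 + s) / 2) = (s - 3) / 2
    rw [div_eq_div_iff (by positivity) (by norm_num)]
    nlinarith
  have ha1 : a 1 = 1 / 2 := rfl
  have ha0pos : (0:ℝ) < a 0 := by rw [ha0]; linarith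
  have ha0lt1 : a 0 < 1 := by rw [ha0]; linarith
  have ha0gt : (1:ℝ)/2 < a 0 := by rw [ha0]; linarith
  have hlt : a 1 < a 0 := by rw [ha1]; exact ha0gt
  obtain ⟨hσ0, hσ1⟩ := sort_two' hlt
  -- singular value computations
  have hd0 : descSV 2 a 0 = a 0 := by
    show (if h : 0 < 2 then a (Tuple.sort a (Fin.rev ⟨0, h⟩)) else 1) = a 0
    rw [dif_pos (by norm_num)]
    have : (Fin.rev ⟨0, by norm_num⟩ : Fin 2) = 1 := by decide
    rw [this, hσ1]
  have hd1 : descSV 2 a 1 = a 1 := by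
    show (if h : 1 < 2 then a (Tuple.sort a (Fin.rev ⟨1, h⟩)) else 1) = a 1
    rw [dif_pos (by norm_num)]
    have : (Fin.rev ⟨1, by norm_num⟩ : Fin 2) = 0 := by decide
    rw [this, hσ0]
  have hc0 : ascSV 2 a 0 = a 1 := by
    show (if h : 0 < 2 then a (Tuple.sort a ⟨0, h⟩) else 1) = a 1
    rw [dif_pos (by norm_num)]
    have : (⟨0, by norm_num⟩ : Fin 2) = 0 := rfl
    rw [this, hσ0]
  have hc1 : ascSV 2 a 1 = a 0 := by
    show (if h : 1 < 2 then a (Tuple.sort a ⟨1, h⟩) else 1) = a 0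
    rw [dif_pos (by norm_num)]
    have : (⟨1, by norm_num⟩ : Fin 2) = 1 := rfl
    rw [this, hσ1]
  -- piecewise formulas
  have hceil1 : ∀ q : ℝ, 0 < q → q ≤ 1 → ⌈q⌉₊ = 1 := by
    intro q h1 h2
    rw [Nat.ceil_eq_iff one_ne_zero]
    constructor <;> push_cast <;> linarith
  have hceil2 : ∀ q : ℝ, 1 < q → q ≤ 2 → ⌈q⌉₊ = 2 := by
    intro q h1 h2
    rw [Nat.ceil_eq_iff (by norm_num)]
    constructor <;> push_cast <;> linarith
  have hPhi1 : ∀ q : ℝ, 0 < q → q ≤ 1 → svPhi 2 a q = a 0 ^ q := by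
    intro q h1 h2
    rw [svPhi, if_neg (ne_of_gt h1), if_pos (by push_cast; linarith), hceil1 q h1 h2]
    simp [hd0]
  have hPhi2 : ∀ q : ℝ, 1 < q → q ≤ 2 → svPhi 2 a q = a 0 * a 1 ^ (q - 1) := by
    intro q h1 h2
    rw [svPhi, if_neg (ne_of_gt (by linarith : (0:ℝ) < q)),
      if_pos (by push_cast; linarith), hceil2 q h1 h2]
    have e2 : q - ((2:ℕ):ℝ) + 1 = q - 1 := by push_cast; ring
    rw [e2, show (2:ℕ) - 1 = 1 from rfl, Finset.prod_range_one, hd0, hd1]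
  have hPhi3 : ∀ q : ℝ, 2 < q → svPhi 2 a q = (a 0 * a 1) ^ (q / 2) := by
    intro q h1
    rw [svPhi, if_neg (ne_of_gt (by linarith : (0:ℝ) < q)), if_neg (by push_cast; linarith)]
    rw [Finset.prod_range_succ, Finset.prod_range_one, hd0, hd1]
    norm_num
  have hPsi1 : ∀ q : ℝ, 0 < q → q ≤ 1 → svPsi 2 a q = a 1 ^ q := by
    intro q h1 h2
    rw [svPsi, if_neg (ne_of_gt h1), if_pos (by push_cast; linarith), hceil1 q h1 h2]
    simp [hc0]
  have hPsi2 : ∀ q : ℝ, 1 < q → q ≤ 2 → svPsi 2 a q = a 1 * a 0 ^ (q - 1) := by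
    intro q h1 h2
    rw [svPsi, if_neg (ne_of_gt (by linarith : (0:ℝ) < q)),
      if_pos (by push_cast; linarith), hceil2 q h1 h2]
    have e2 : q - ((2:ℕ):ℝ) + 1 = q - 1 := by push_cast; ring
    rw [e2, show (2:ℕ) - 1 = 1 from rfl, Finset.prod_range_one, hc0, hc1]
  have hPsi3 : ∀ q : ℝ, 2 < q → svPsi 2 a q = (a 1 * a 0) ^ (q / 2) := by
    intro q h1
    rw [svPsi, if_neg (ne_of_gt (by linarith : (0:ℝ) < q)), if_neg (by push_cast; linarith)]
    rw [Finset.prod_range_succ, Finset.prod_range_one, hc0, hc1]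
    norm_num
  -- the candidate exponent
  set t : ℝ := Real.log (s - 3) / Real.log 2 with ht
  have hlog2 : (0:ℝ) < Real.log 2 := Real.log_pos (by norm_num)
  have hs3pos : (0:ℝ) < s - 3 := by linarith
  have htpos : 0 < t := by
    apply div_pos (Real.log_pos (by linarith)) hlog2
  have htle : t ≤ 1 := by
    rw [ht, div_le_one hlog2]
    exact Real.log_le_log (by linarith) (by linarith)
  -- value at q₀
  have hval : svPhi 2 a (1 + t) * 2 = 1 := by
    rw [hPhi2 (1 + t) (by linarith) (by linarith)]
    have hpow : a 1 ^ ((1 + t) - 1) = (s - 3)⁻¹ := by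
      rw [ha1, show (1 + t) - 1 = t by ring,
        Real.rpow_def_of_pos (by norm_num : (0:ℝ) < 1/2)]
      rw [show Real.log (1/2) = -Real.log 2 by rw [one_div, Real.log_inv]]
      rw [show -Real.log 2 * t = Real.log (s - 3)⁻¹ by
        rw [Real.log_inv, ht]; field_simp]
      exact Real.exp_log (by positivity)
    rw [hpow, ha0]
    field_simp
  have hval1 : svPsi 2 a 1 * 2 = 1 := by
    rw [hPsi1 1 one_pos le_rfl, ha1, Real.rpow_one]; norm_num
  refine ⟨⟨1 + t, ⟨by linarith, hval⟩, ?_⟩, hval, ⟨1, ⟨one_pos, hval1⟩, ?_⟩, hval1⟩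
  · -- uniqueness for Φ
    rintro q ⟨hq, heq⟩
    rcases le_or_gt q 1 with h1 | h1
    · exfalso
      rw [hPhi1 q hq h1] at heq
      have : a 0 ^ (1:ℝ) ≤ a 0 ^ q :=
        Real.rpow_le_rpow_of_exponent_ge ha0pos (le_of_lt ha0lt1) h1
      rw [Real.rpow_one] at this
      linarith
    rcases le_or_gt q 2 with h2 | h2
    · rw [hPhi2 q h1 h2, ha1] at heq
      rw [ha0] at heq
      have hm : ((1:ℝ)/2) ^ (q - 1) * (s - 3) = 1 := by linarith
      have hkey : ((1:ℝ)/2) ^ (q - 1) = (s - 3)⁻¹ := eq_inv_of_mul_eq_one_left hm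
      have hlogeq : (q - 1) * Real.log (1/2) = Real.log (s - 3)⁻¹ := by
        rw [← Real.log_rpow (by norm_num : (0:ℝ) < 1/2), hkey]
      rw [show Real.log (1/2) = -Real.log 2 by rw [one_div, Real.log_inv],
        Real.log_inv] at hlogeq
      have : (q - 1) * Real.log 2 = Real.log (s - 3) := by linarith
      have : q - 1 = t := by rw [ht, eq_div_iff (ne_of_gt hlog2)]; linarith
      linarith
    · exfalso
      rw [hPhi3 q h2, ha1] at heq
      have hXpos : (0:ℝ) < a 0 * (1/2) := by positivity
      have hXlt : a 0 * (1/2) < 1/2 := by linarith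
      have : (a 0 * (1/2)) ^ (q/2) < (a 0 * (1/2)) ^ (1:ℝ) :=
        Real.rpow_lt_rpow_of_exponent_gt hXpos (by linarith) (by linarith)
      rw [Real.rpow_one] at this
      linarith
  · -- uniqueness for Ψ
    rintro q ⟨hq, heq⟩
    rcases le_or_gt q 1 with h1 | h1
    · rw [hPsi1 q hq h1, ha1] at heq
      have hkey : ((1:ℝ)/2) ^ q = (1:ℝ)/2 := by linarith
      have := Real.log_rpow (show (0:ℝ) < 1/2 by norm_num) q
      rw [hkey] at this
      have hl : Real.log (1/2) = -Real.log 2 := by rw [one_div, Real.log_inv]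
      rw [hl] at this
      have hq1 : q * Real.log 2 = 1 * Real.log 2 := by nlinarith
      exact mul_right_cancel₀ (ne_of_gt hlog2) hq1
    rcases le_or_gt q 2 with h2 | h2
    · exfalso
      rw [hPsi2 q h1 h2, ha1] at heq
      have hkey : a 0 ^ (q - 1) = 1 := by linarith
      have : a 0 ^ (q - 1) < 1 :=
        Real.rpow_lt_one (le_of_lt ha0pos) ha0lt1 (by linarith)
      linarith
    · exfalso
      rw [hPsi3 q h2, ha1] at heq
      have hXpos : (0:ℝ) < (1/2) * a 0 := by positivity
      have hXlt : (1:ℝ)/2 * a 0 < 1/2 := by linarith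
      have : ((1/2) * a 0) ^ (q/2) < ((1/2) * a 0) ^ (1:ℝ) :=
        Real.rpow_lt_rpow_of_exponent_gt hXpos (by linarith) (by linarith)
      rw [Real.rpow_one] at this
      linarith
end
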